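/- In Setup B, let J ∈ Λ with n+1 ∈ J, fix i₀ ∈ I'∖J, let c = (c_i)_{i∈J} be integers, and set J' := (J∖{n+1}) ∪ I'. For an admissible multi-index 𝔪, define γ(𝔪) := Σ_{i∈I'∩J}(c_i+m_i)·b_i* + Σ_{i∈I'∩K₁} m_i·b_i* + Σ_{i∈J'∖I'} c_i·b_i* + ⌈(c_{n+1} − Σ_{i∈I'∩J} α_i(c_i+m_i) − Σ_{i∈I'∩K₁} α_i m_i)/α_{i₀}⌉·b_{i₀}*. Let S := {Σ_{i=1}^n k_i·b_i* : k_i ∈ ℤ, k_{i₀} ≥ 0, k_i ≥ 0 for i ∈ J'∖I', k_i = 0 for i ∈ I'∖{i₀}} (the entries k_i for i ∈ I∖J' are arbitrary integers). Then the set Ξ := {ξ = Σ_{i=1}^n ξ_i·b_i* : ξ_i ∈ ℤ, ξ_i ≥ c_i for all i ∈ J∩I, and Σ_{i=1}^{n'} α_i ξ_i ≥ c_{n+1}} is the disjoint union, over all admissible multi-indices 𝔪, of the translates γ(𝔪) + S; that is, every ξ ∈ Ξ lies in γ(𝔪) + S for exactly one admissible 𝔪, and conversely γ(𝔪) + S ⊆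 Ξ for every admissible 𝔪. -/

import Mathlib

open scoped RealInnerProductSpace BigOperators

noncomputable section

/-- Euclidean space `ℝⁿ` with the standard inner product. -/
abbrev E (n : ℕ) : Type := EuclideanSpace ℝ (Fin n)

/-- The index set `I' = {1,…,n'}` inside `Ī = {1,…,n+1}` (index `Fin.last n`
plays the role of `n+1`). -/
def Iprime (n n' : ℕ) : Finset (Fin (n + 1)) := Finset.univ.filter fun i => i.val < n'

/-- `C(J,c) := {x ∈ ℝⁿ : ⟨x, b_i⟩ > c_i for all i ∈ J}`. -/
def CSet (n : ℕ) (b : Fin (n + 1) → E n) (J : Finset (Fin (n + 1)))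
    (c : Fin (n + 1) → ℤ) : Set (E n) :=
  {x | ∀ i ∈ J, (c i : ℝ) < ⟪x, b i⟫}

/-- A multi-index `𝔪 = (m_i)_{i ∈ I'∖{i₀}}` is admissible if `m_i ≥ 0` for every
`i ∈ I' ∩ J` (recall `i₀ ∉ J`). -/
def Admissible (n n' : ℕ) (J : Finset (Fin (n + 1))) (m : Fin (n + 1) → ℤ) : Prop :=
  ∀ i ∈ Iprime n n' ∩ J, 0 ≤ m i

/-- The ceiling bound
`⌈(c_{n+1} − Σ_{i∈I'∩J} α_i(c_i+m_i) − Σ_{i∈I'∩K₁} α_i m_i)/α_{i₀}⌉`,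
where `K₁ = Ī∖(J∪{i₀})`, so `I'∩K₁ = (I'∖J)∖{i₀}`. -/
def ceilB (n n' : ℕ) (α : Fin (n + 1) → ℚ) (J : Finset (Fin (n + 1)))
    (i₀ : Fin (n + 1)) (c m : Fin (n + 1) → ℤ) : ℤ :=
  ⌈((c (Fin.last n) : ℚ) - ∑ i ∈ Iprime n n' ∩ J, α i * ((c i : ℚ) + (m i : ℚ))
      - ∑ i ∈ (Iprime n n' \ J).erase i₀, α i * (m i : ℚ)) / α i₀⌉

/-- `V(J,c,𝔪)` as in Setup B. -/
def VSet (n n' : ℕ) (b : Fin (n + 1) → E n) (α : Fin (n + 1) → ℚ)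
    (J : Finset (Fin (n + 1))) (i₀ : Fin (n + 1)) (c m : Fin (n + 1) → ℤ) :
    Set (E n) :=
  {x | (∀ i ∈ Iprime n n' ∩ J, ((c i : ℝ) + (m i : ℝ)) < ⟪x, b i⟫)
    ∧ (∀ i ∈ (Iprime n n' \ J).erase i₀, (m i : ℝ) < ⟪x, b i⟫)
    ∧ (∀ i ∈ (J \ Iprime n n').erase (Fin.last n), (c i : ℝ) < ⟪x, b i⟫)
    ∧ ((ceilB n n' α J i₀ c m : ℝ) < ⟪x, b i₀⟫)}

/-- `F(J,c) := ⋃_{𝔪 admissible} V(J,c,𝔪)` (for `n+1 ∈ J`, with the choice `i₀`). -/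
def FSetB (n n' : ℕ) (b : Fin (n + 1) → E n) (α : Fin (n + 1) → ℚ)
    (J : Finset (Fin (n + 1))) (i₀ : Fin (n + 1)) (c : Fin (n + 1) → ℤ) : Set (E n) :=
  {x | ∃ m : Fin (n + 1) → ℤ, Admissible n n' J m ∧ x ∈ VSet n n' b α J i₀ c m}

/-- `F(J,c)` in general: the union above when `n+1 ∈ J`, and `C(J,c)` otherwise. -/
def FSetB' (n n' : ℕ) (b : Fin (n + 1) → E n) (α : Fin (n + 1) → ℚ)
    (J : Finset (Fin (n + 1))) (i₀ : Fin (n + 1)) (c : Fin (n + 1) → ℤ) : Set (E n) :=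
  if Fin.last n ∈ J then FSetB n n' b α J i₀ c else CSet n b J c


/-!
Expanding in the dual basis identifies lattice points with integer vectors, whose coordinates
are read off by pairing with the `bᵢ`. A point `ξ ∈ Ξ` determines `𝔪` through its coordinates
on `I' ∖ {i₀}` (subtracting `cᵢ` on `I' ∩ J`), and then `γ(𝔪)` agrees with `ξ` there. Given
that agreement, the only condition involving `ξ_{i₀}`, namely `Σ αᵢ ξᵢ ≥ c_{n+1}`, is equivalent
(as `α_{i₀} > 0`) to `ξ_{i₀} ≥ ⌈…⌉`, the `i₀`-coordinate of `γ(𝔪)`; the remaining inequalities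
defining `Ξ` and `S` match coordinatewise.
-/

section LatticeMap

variable {ι V : Type*}

def latticeMap [AddCommGroup V] [Module ℝ V] (s : Finset ι) (v : ι → V) : (ι → ℤ) →+ V where
  toFun a := ∑ i ∈ s, (a i : ℝ) • v i
  map_zero' := by simp
  map_add' a a' := by simp [add_smul, Finset.sum_add_distrib]

theorem latticeMap_apply [AddCommGroup V] [Module ℝ V] (s : Finset ι) (v : ι → V) (a : ι → ℤ) :
    latticeMap s v a = ∑ i ∈ s, (a i : ℝ) • v i :=
  rfl

theorem latticeMap_indicator [AddCommGroup V] [Module ℝ V] {s t : Finset ι} (hts : t ⊆ s)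
    (v : ι → V) (a : ι → ℤ) :
    latticeMap s v ((t : Set ι).indicator a) = ∑ i ∈ t, (a i : ℝ) • v i := by
  classical
  simp only [latticeMap_apply, Set.indicator_apply, Finset.mem_coe, apply_ite (Int.cast : ℤ → ℝ),
    Int.cast_zero, ite_smul, zero_smul, Finset.sum_ite_mem, Finset.inter_eq_right.2 hts]

theorem latticeMap_single [AddCommGroup V] [Module ℝ V] [DecidableEq ι] {s : Finset ι} {j : ι}
    (hj : j ∈ s) (v : ι → V) (z : ℤ) :
    latticeMap s v (Pi.single j z) = (z : ℝ) • v j := by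
  rw [latticeMap_apply, Finset.sum_eq_single_of_mem j hj]
  · simp
  · intro i _ hij
    simp [hij]

theorem inner_latticeMap [DecidableEq ι] [NormedAddCommGroup V] [InnerProductSpace ℝ V]
    {s : Finset ι} {v w : ι → V} (hdual : ∀ i ∈ s, ∀ j ∈ s, ⟪v i, w j⟫ = if i = j then 1 else 0)
    (a : ι → ℤ) {j : ι} (hj : j ∈ s) :
    ⟪latticeMap s v a, w j⟫ = a j := by
  rw [latticeMap_apply, sum_inner, Finset.sum_eq_single_of_mem j hj]
  · simp [real_inner_smul_left, hdual j hj j hj]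
  · intro i hi hij
    simp [real_inner_smul_left, hdual i hi j hj, if_neg hij]

theorem apply_eq_of_latticeMap_eq [DecidableEq ι] [NormedAddCommGroup V] [InnerProductSpace ℝ V]
    {s : Finset ι} {v w : ι → V} (hdual : ∀ i ∈ s, ∀ j ∈ s, ⟪v i, w j⟫ = if i = j then 1 else 0)
    {a a' : ι → ℤ} (h : latticeMap s v a = latticeMap s v a') {j : ι} (hj : j ∈ s) :
    a j = a' j := by
  have := congrArg (⟪·, w j⟫) h
  simpa [inner_latticeMap hdual _ hj] using this

end LatticeMap

theorem Finset.sum_eq_sum_inter_add_sum_sdiff_erase_add {ι M : Type*} [DecidableEq ι]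
    [AddCommMonoid M] {s t : Finset ι} {a : ι} (ha : a ∈ s \ t) (f : ι → M) :
    ∑ i ∈ s, f i = ∑ i ∈ s ∩ t, f i + ∑ i ∈ (s \ t).erase a, f i + f a := by
  rw [← Finset.sum_inter_add_sum_sdiff s t f, ← Finset.sum_erase_add _ f ha, add_assoc]

section SetupB

variable {n n' : ℕ} {α : Fin (n + 1) → ℚ} {J : Finset (Fin (n + 1))} {i₀ : Fin (n + 1)}
  {c : Fin (n + 1) → ℤ}

theorem last_notMem_Iprime (hn : n' ≤ n) : Fin.last n ∉ Iprime n n' := by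
  simp [Iprime, hn]

theorem Iprime_subset_filter_lt (hn : n' ≤ n) :
    Iprime n n' ⊆ Finset.univ.filter fun i : Fin (n + 1) => i.val < n := by
  intro i hi
  simp only [Iprime, Finset.mem_filter, Finset.mem_univ, true_and] at hi ⊢
  omega

theorem erase_last_subset_filter_lt (J : Finset (Fin (n + 1))) :
    J.erase (Fin.last n) ⊆ Finset.univ.filter fun i : Fin (n + 1) => i.val < n := fun i hi =>
  Finset.mem_filter.2 ⟨Finset.mem_univ i, Fin.val_lt_last (Finset.ne_of_mem_erase hi)⟩

def gammaCoeff (n n' : ℕ) (α : Fin (n + 1) → ℚ) (J : Finset (Fin (n + 1))) (i₀ : Fin (n + 1))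
    (c m : Fin (n + 1) → ℤ) : Fin (n + 1) → ℤ :=
  (↑(Iprime n n' ∩ J) : Set (Fin (n + 1))).indicator (c + m)
    + (↑((Iprime n n' \ J).erase i₀) : Set (Fin (n + 1))).indicator m
    + (↑(J.erase (Fin.last n) \ Iprime n n') : Set (Fin (n + 1))).indicator c
    + Pi.single i₀ (ceilB n n' α J i₀ c m)

def IsXiCoeff (n n' : ℕ) (α : Fin (n + 1) → ℚ) (J : Finset (Fin (n + 1)))
    (c x : Fin (n + 1) → ℤ) : Prop :=
  (∀ i ∈ J.erase (Fin.last n), c i ≤ x i)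
    ∧ (c (Fin.last n) : ℚ) ≤ ∑ i ∈ Iprime n n', α i * (x i : ℚ)

def IsSCoeff (n n' : ℕ) (J : Finset (Fin (n + 1))) (i₀ : Fin (n + 1)) (k : Fin (n + 1) → ℤ) :
    Prop :=
  0 ≤ k i₀ ∧ (∀ i ∈ J.erase (Fin.last n) \ Iprime n n', 0 ≤ k i)
    ∧ ∀ i ∈ (Iprime n n').erase i₀, k i = 0

theorem gammaCoeff_of_mem_inter (hi₀ : i₀ ∉ J) (m : Fin (n + 1) → ℤ) {i : Fin (n + 1)}
    (hi : i ∈ Iprime n n' ∩ J) : gammaCoeff n n' α J i₀ c m i = c i + m i := by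
  obtain ⟨hiI, hiJ⟩ := Finset.mem_inter.1 hi
  have : i ≠ i₀ := by rintro rfl; exact hi₀ hiJ
  simp [gammaCoeff, hiI, hiJ, this]

theorem gammaCoeff_of_mem_sdiff_erase (m : Fin (n + 1) → ℤ) {i : Fin (n + 1)}
    (hi : i ∈ (Iprime n n' \ J).erase i₀) : gammaCoeff n n' α J i₀ c m i = m i := by
  obtain ⟨hne, hiI, hiJ⟩ := by simpa only [Finset.mem_erase, Finset.mem_sdiff] using hi
  simp [gammaCoeff, hiI, hiJ, hne]

theorem gammaCoeff_of_mem_erase_last_sdiff (hi₀ : i₀ ∈ Iprime n n') (m : Fin (n + 1) → ℤ)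
    {i : Fin (n + 1)} (hi : i ∈ J.erase (Fin.last n) \ Iprime n n') :
    gammaCoeff n n' α J i₀ c m i = c i := by
  obtain ⟨⟨hne, hiJ⟩, hiI⟩ := by simpa only [Finset.mem_sdiff, Finset.mem_erase] using hi
  have : i ≠ i₀ := by rintro rfl; exact hiI hi₀
  simp [gammaCoeff, hiI, hiJ, hne, this]

theorem gammaCoeff_self (hi₀ : i₀ ∈ Iprime n n' \ J) (m : Fin (n + 1) → ℤ) :
    gammaCoeff n n' α J i₀ c m i₀ = ceilB n n' α J i₀ c m := by
  obtain ⟨hi₀I, hi₀J⟩ := Finset.mem_sdiff.1 hi₀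
  simp [gammaCoeff, hi₀I, hi₀J]

theorem eq_of_gammaCoeff_eq (hi₀ : i₀ ∉ J) {m m' : Fin (n + 1) → ℤ} {i : Fin (n + 1)}
    (hi : i ∈ (Iprime n n').erase i₀)
    (h : gammaCoeff n n' α J i₀ c m i = gammaCoeff n n' α J i₀ c m' i) : m i = m' i := by
  obtain ⟨hne, hiI⟩ := Finset.mem_erase.1 hi
  by_cases hiJ : i ∈ J
  · have hmem : i ∈ Iprime n n' ∩ J := Finset.mem_inter.2 ⟨hiI, hiJ⟩
    rw [gammaCoeff_of_mem_inter hi₀ m hmem, gammaCoeff_of_mem_inter hi₀ m' hmem] at h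
    omega
  · have hmem : i ∈ (Iprime n n' \ J).erase i₀ := by simp [hne, hiI, hiJ]
    rwa [gammaCoeff_of_mem_sdiff_erase m hmem, gammaCoeff_of_mem_sdiff_erase m' hmem] at h

theorem ceilB_le_iff (hα₀ : 0 < α i₀) (hi₀ : i₀ ∈ Iprime n n' \ J) {m x : Fin (n + 1) → ℤ}
    (hx : ∀ i ∈ (Iprime n n').erase i₀, x i = gammaCoeff n n' α J i₀ c m i) :
    ceilB n n' α J i₀ c m ≤ x i₀ ↔ (c (Fin.last n) : ℚ) ≤ ∑ i ∈ Iprime n n', α i * (x i : ℚ) := by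
  have hJsum : ∑ i ∈ Iprime n n' ∩ J, α i * (x i : ℚ)
      = ∑ i ∈ Iprime n n' ∩ J, α i * ((c i : ℚ) + (m i : ℚ)) :=
    Finset.sum_congr rfl fun i hi => by
      have hne : i ≠ i₀ := by
        rintro rfl; exact (Finset.mem_sdiff.1 hi₀).2 (Finset.mem_inter.1 hi).2
      rw [hx i (Finset.mem_erase.2 ⟨hne, (Finset.mem_inter.1 hi).1⟩),
        gammaCoeff_of_mem_inter (Finset.mem_sdiff.1 hi₀).2 m hi, Int.cast_add]
  have hJcsum : ∑ i ∈ (Iprime n n' \ J).erase i₀, α i * (x i : ℚ)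
      = ∑ i ∈ (Iprime n n' \ J).erase i₀, α i * (m i : ℚ) :=
    Finset.sum_congr rfl fun i hi => by
      rw [hx i (Finset.erase_subset_erase _ Finset.sdiff_subset hi),
        gammaCoeff_of_mem_sdiff_erase m hi]
  rw [ceilB, Int.ceil_le, div_le_iff₀ hα₀,
    Finset.sum_eq_sum_inter_add_sum_sdiff_erase_add hi₀, hJsum, hJcsum]
  constructor <;> intro h <;> linarith

theorem exists_admissible_isSCoeff_sub_gammaCoeff (hn : n' ≤ n) (hα₀ : 0 < α i₀)
    (hi₀ : i₀ ∈ Iprime n n' \ J) {x : Fin (n + 1) → ℤ} (hx : IsXiCoeff n n' α J c x) :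
    ∃ m, Admissible n n' J m ∧ IsSCoeff n n' J i₀ (x - gammaCoeff n n' α J i₀ c m) := by
  obtain ⟨hxJ, hxα⟩ := hx
  have hcx : ∀ i ∈ Iprime n n' ∩ J, c i ≤ x i := fun i hi =>
    hxJ i <| Finset.mem_erase.2
      ⟨ne_of_mem_of_not_mem (Finset.mem_inter.1 hi).1 (last_notMem_Iprime hn),
        (Finset.mem_inter.1 hi).2⟩
  let m : Fin (n + 1) → ℤ := fun i => if i ∈ J then x i - c i else x i
  have hxg : ∀ i ∈ (Iprime n n').erase i₀, x i = gammaCoeff n n' α J i₀ c m i := by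
    intro i hi
    obtain ⟨hne, hiI⟩ := Finset.mem_erase.1 hi
    by_cases hiJ : i ∈ J
    · rw [gammaCoeff_of_mem_inter (Finset.mem_sdiff.1 hi₀).2 m (Finset.mem_inter.2 ⟨hiI, hiJ⟩)]
      simp [m, hiJ]
    · rw [gammaCoeff_of_mem_sdiff_erase m (by simp [hne, hiI, hiJ])]
      simp [m, hiJ]
  refine ⟨m, fun i hi => ?_, ?_, fun i hi => ?_, fun i hi => ?_⟩
  · simpa [m, (Finset.mem_inter.1 hi).2] using hcx i hi
  · simpa [gammaCoeff_self hi₀] using (ceilB_le_iff hα₀ hi₀ hxg).2 hxα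
  · simpa [gammaCoeff_of_mem_erase_last_sdiff (Finset.mem_sdiff.1 hi₀).1 m hi]
      using hxJ i (Finset.mem_sdiff.1 hi).1
  · simp [hxg i hi]

theorem isXiCoeff_gammaCoeff_add (hα₀ : 0 < α i₀) (hi₀ : i₀ ∈ Iprime n n' \ J)
    {m k : Fin (n + 1) → ℤ} (hm : Admissible n n' J m) (hk : IsSCoeff n n' J i₀ k) :
    IsXiCoeff n n' α J c (gammaCoeff n n' α J i₀ c m + k) := by
  obtain ⟨hk₀, hkJ, hkI⟩ := hk
  refine ⟨fun i hi => ?_, ?_⟩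
  · by_cases hiI : i ∈ Iprime n n'
    · have hiJ : i ∈ J := Finset.mem_of_mem_erase hi
      have hiIJ : i ∈ Iprime n n' ∩ J := Finset.mem_inter.2 ⟨hiI, hiJ⟩
      have hne : i ≠ i₀ := by rintro rfl; exact (Finset.mem_sdiff.1 hi₀).2 hiJ
      simp [gammaCoeff_of_mem_inter (Finset.mem_sdiff.1 hi₀).2 m hiIJ,
        hkI i (Finset.mem_erase.2 ⟨hne, hiI⟩), hm i hiIJ]
    · have hiJI : i ∈ J.erase (Fin.last n) \ Iprime n n' := Finset.mem_sdiff.2 ⟨hi, hiI⟩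
      simpa [gammaCoeff_of_mem_erase_last_sdiff (Finset.mem_sdiff.1 hi₀).1 m hiJI]
        using hkJ i hiJI
  · refine (ceilB_le_iff (m := m) hα₀ hi₀ fun i hi => by simp [hkI i hi]).1 ?_
    simpa [gammaCoeff_self hi₀] using hk₀

end SetupB

theorem stmt7 (n n' : ℕ) (hn'n : n' ≤ n)
    (b bs : Fin (n + 1) → E n) (α : Fin (n + 1) → ℚ)
    (hdual : ∀ i j : Fin (n + 1), i.val < n → j.val < n →
      ⟪bs i, b j⟫ = if i = j then 1 else 0)
    (hα : ∀ i : Fin (n + 1), i.val < n' → 0 < α i)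
    (J : Finset (Fin (n + 1)))
    (i₀ : Fin (n + 1)) (hi₀ : i₀ ∈ Iprime n n' \ J)
    (c : Fin (n + 1) → ℤ)
    (J' : Finset (Fin (n + 1))) (hJ' : J' = J.erase (Fin.last n) ∪ Iprime n n')
    (γ : (Fin (n + 1) → ℤ) → E n)
    (hγ : ∀ m, γ m =
      (∑ i ∈ Iprime n n' ∩ J, ((c i + m i : ℤ) : ℝ) • bs i)
      + (∑ i ∈ (Iprime n n' \ J).erase i₀, ((m i : ℤ) : ℝ) • bs i)
      + (∑ i ∈ J' \ Iprime n n', ((c i : ℤ) : ℝ) • bs i)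
      + ((ceilB n n' α J i₀ c m : ℤ) : ℝ) • bs i₀)
    (S : Set (E n))
    (hS : S = {y | ∃ k : Fin (n + 1) → ℤ,
      y = ∑ i ∈ Finset.univ.filter (fun i : Fin (n + 1) => i.val < n), (k i : ℝ) • bs i
      ∧ 0 ≤ k i₀ ∧ (∀ i ∈ J' \ Iprime n n', 0 ≤ k i)
      ∧ (∀ i ∈ (Iprime n n').erase i₀, k i = 0)})
    (Ξ : Set (E n))
    (hΞ : Ξ = {ξ | ∃ xc : Fin (n + 1) → ℤ,
      ξ = ∑ i ∈ Finset.univ.filter (fun i : Fin (n + 1) => i.val < n), (xc i : ℝ) • bs i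
      ∧ (∀ i ∈ J.erase (Fin.last n), c i ≤ xc i)
      ∧ (c (Fin.last n) : ℚ) ≤ ∑ i ∈ Iprime n n', α i * (xc i : ℚ)}) :
    (∀ ξ ∈ Ξ, ∃ m : Fin (n + 1) → ℤ, Admissible n n' J m ∧ ξ - γ m ∈ S)
    ∧ (∀ ξ ∈ Ξ, ∀ m m' : Fin (n + 1) → ℤ, Admissible n n' J m → Admissible n n' J m' →
        ξ - γ m ∈ S → ξ - γ m' ∈ S → ∀ i ∈ (Iprime n n').erase i₀, m i = m' i)
    ∧ (∀ m : Fin (n + 1) → ℤ, Admissible n n' J m → ∀ y ∈ S, γ m + y ∈ Ξ) := by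
  set L := latticeMap (Finset.univ.filter fun i : Fin (n + 1) => i.val < n) bs
  have hlow : ∀ i ∈ Finset.univ.filter (fun i : Fin (n + 1) => i.val < n),
      ∀ j ∈ Finset.univ.filter (fun i : Fin (n + 1) => i.val < n),
        ⟪bs i, b j⟫ = if i = j then 1 else 0 := fun i hi j hj =>
    hdual i j (Finset.mem_filter.1 hi).2 (Finset.mem_filter.1 hj).2
  have hI := Iprime_subset_filter_lt hn'n
  have hα₀ : 0 < α i₀ := hα i₀ (by simpa [Iprime] using (Finset.mem_sdiff.1 hi₀).1)
  rw [hJ', Finset.union_sdiff_right] at hγ hS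
  have hγL : ∀ m, γ m = L (gammaCoeff n n' α J i₀ c m) := fun m => by
    rw [hγ, gammaCoeff, map_add, map_add, map_add,
      latticeMap_single (hI (Finset.mem_sdiff.1 hi₀).1),
      latticeMap_indicator (Finset.inter_subset_left.trans hI),
      latticeMap_indicator ((Finset.erase_subset _ _).trans (Finset.sdiff_subset.trans hI)),
      latticeMap_indicator (Finset.sdiff_subset.trans (erase_last_subset_filter_lt J))]
    rfl
  have hcoord : ∀ x m k, L x - γ m = L k → ∀ i ∈ Iprime n n',
      x i = gammaCoeff n n' α J i₀ c m i + k i := fun x m k h i hi =>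
    apply_eq_of_latticeMap_eq hlow (a' := gammaCoeff n n' α J i₀ c m + k)
      (by rw [map_add, ← hγL, ← h]; exact (add_sub_cancel (γ m) (L x)).symm) (hI hi)
  subst hS hΞ
  refine ⟨?_, ?_, ?_⟩
  · rintro _ ⟨x, rfl, hx⟩
    obtain ⟨m, hm, hk⟩ := exists_admissible_isSCoeff_sub_gammaCoeff hn'n hα₀ hi₀ hx
    exact ⟨m, hm, _, by rw [hγL]; exact (map_sub L x _).symm, hk⟩
  · rintro _ ⟨x, rfl, -⟩ m m' - - ⟨k, hk, -, -, hk₀⟩ ⟨k', hk', -, -, hk₀'⟩ i hi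
    have h := hcoord x m k hk i (Finset.mem_of_mem_erase hi)
    have h' := hcoord x m' k' hk' i (Finset.mem_of_mem_erase hi)
    rw [hk₀ i hi, add_zero] at h
    rw [hk₀' i hi, add_zero] at h'
    exact eq_of_gammaCoeff_eq (Finset.mem_sdiff.1 hi₀).2 hi (h.symm.trans h')
  · rintro m hm _ ⟨k, rfl, hk⟩
    exact ⟨gammaCoeff n n' α J i₀ c m + k, by rw [hγL]; exact (map_add L _ k).symm,
      isXiCoeff_gammaCoeff_add hα₀ hi₀ hm hk⟩
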